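/- arXiv:1307.2781 — 2 statements merged into one kernel-verified Lean document; each statement's English description precedes it below -/
import Mathlib

section
/- Let m : ℝ → [0,1] be measurable with ∫ x·m(x) dγ¹(x) = q(∫ m(x) dγ¹(x)) (equality in the center-of-mass bound, with nonnegative left side). Then there exists α ∈ ℝ such that m(x) = 1_{x ≥ α} for γ¹-almost every x. -/
open MeasureTheory ProbabilityTheory Real Set Filter

noncomputable def gamma1 : Measure ℝ := gaussianReal 0 1

noncomputable def Phi (t : ℝ) : ℝ :=
  ∫ s in Set.Iic t, (Real.sqrt (2 * Real.pi))⁻¹ * Real.exp (-s ^ 2 / 2)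

noncomputable def Psi : ℝ → ℝ := Function.invFun Phi

noncomputable def qfun (s : ℝ) : ℝ := -∫ x in Set.Iic (Psi s), x ∂gamma1

open scoped NNReal

/-! Bathtub principle. Put `a = ∫ m dγ` and `c = -Ψ(a)`, and let `φ` be the standard Gaussian
density. The indicator `g` of `[c, ∞)` has the same mass `a` as `m` and first moment
`φ(c) = φ(Ψ(a)) = q(a)`, while `(x - c) (g x - m x) ≥ 0` pointwise because `0 ≤ m ≤ 1`. Equal
first moments therefore force this product to vanish a.e., so `m = g` off the null set `{c}`.
The masses `a = 0, 1` (where `Ψ(a)` is a junk value) are excluded because then `∫ x m dγ = 0`,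
whereas `q` is a value of `φ`, hence positive. -/

section UnitInterval

variable {α : Type*} [MeasurableSpace α] {μ : Measure α} {f m : α → ℝ}

lemma integrable_of_forall_mem_Icc [IsFiniteMeasure μ] (hm : Measurable m)
    (hm01 : ∀ x, m x ∈ Icc (0 : ℝ) 1) : Integrable m μ :=
  .of_bound hm.aestronglyMeasurable 1 (ae_of_all _ fun x => by
    rw [norm_of_nonneg (hm01 x).1]; exact (hm01 x).2)

lemma integral_pos_of_integral_mul_ne_zero (hm : ∀ x, 0 ≤ m x) (hmi : Integrable m μ)
    (h : ∫ x, f x * m x ∂μ ≠ 0) : 0 < ∫ x, m x ∂μ := by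
  refine (integral_nonneg hm).lt_of_ne fun h0 => h ?_
  have hm0 : m =ᵐ[μ] 0 := (integral_eq_zero_iff_of_nonneg hm hmi).1 h0.symm
  exact integral_eq_zero_of_ae (hm0.mono fun x (hx : m x = 0) => by simp [hx])

lemma integral_lt_one_of_integral_mul_ne [IsProbabilityMeasure μ] (hm : ∀ x, m x ≤ 1)
    (hmi : Integrable m μ) (h : ∫ x, f x * m x ∂μ ≠ ∫ x, f x ∂μ) : ∫ x, m x ∂μ < 1 := by
  have hle : ∫ x, m x ∂μ ≤ 1 := by simpa using integral_mono hmi (integrable_const 1) hm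
  refine hle.lt_of_ne fun h1 => h ?_
  have hm1 : (fun x => 1 - m x) =ᵐ[μ] 0 := by
    refine (integral_eq_zero_iff_of_nonneg (fun x => sub_nonneg.2 (hm x))
      ((integrable_const 1).sub hmi)).1 ?_
    rw [integral_sub (integrable_const 1) hmi, h1]
    simp
  exact integral_congr_ae (hm1.mono fun x (hx : 1 - m x = 0) => by
    simp [(sub_eq_zero.1 hx).symm])

end UnitInterval

section Bathtub

variable {μ : Measure ℝ} [IsFiniteMeasure μ] {m : ℝ → ℝ} {c : ℝ}

lemma indicator_Ici_one_mem_Icc (c x : ℝ) : (Ici c).indicator (1 : ℝ → ℝ) x ∈ Icc (0 : ℝ) 1 := by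
  by_cases hx : x ∈ Ici c <;> simp [hx]

lemma sub_mul_indicator_Ici_sub_nonneg {y : ℝ} (x : ℝ) (hy : y ∈ Icc (0 : ℝ) 1) :
    0 ≤ (x - c) * ((Ici c).indicator 1 x - y) := by
  by_cases hx : c ≤ x
  · simp only [indicator_of_mem (mem_Ici.2 hx), Pi.one_apply]
    exact mul_nonneg (sub_nonneg.2 hx) (sub_nonneg.2 hy.2)
  · simp only [indicator_of_notMem (notMem_Ici.2 (not_le.1 hx)), zero_sub]
    exact mul_nonneg_of_nonpos_of_nonpos (by linarith [not_le.1 hx]) (neg_nonpos.2 hy.1)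

lemma integrable_sub_mul_indicator_Ici_sub (hid : Integrable (fun x => x) μ) (hm : Measurable m)
    (hm01 : ∀ x, m x ∈ Icc (0 : ℝ) 1) :
    Integrable (fun x => (x - c) * ((Ici c).indicator 1 x - m x)) μ := by
  refine Integrable.mul_bdd (c := 1) (hid.sub (integrable_const c))
    ((measurable_const.indicator measurableSet_Ici).sub hm).aestronglyMeasurable
    (ae_of_all _ fun x => ?_)
  obtain ⟨hg0, hg1⟩ := indicator_Ici_one_mem_Icc c x
  exact abs_sub_le_of_nonneg_of_le hg0 hg1 (hm01 x).1 (hm01 x).2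

lemma integral_sub_mul_indicator_Ici_sub (hid : Integrable (fun x => x) μ) (hm : Measurable m)
    (hm01 : ∀ x, m x ∈ Icc (0 : ℝ) 1) :
    ∫ x, (x - c) * ((Ici c).indicator 1 x - m x) ∂μ
      = (∫ x in Ici c, x ∂μ - ∫ x, x * m x ∂μ) - c * (μ.real (Ici c) - ∫ x, m x ∂μ) := by
  set g := (Ici c).indicator (1 : ℝ → ℝ)
  have hxg : (fun x => x * g x) = (Ici c).indicator fun x => x := by
    ext x; by_cases hx : x ∈ Ici c <;> simp [g, hx]
  have hgi : Integrable g μ := (integrable_const 1).indicator measurableSet_Ici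
  have hmi : Integrable m μ := integrable_of_forall_mem_Icc hm hm01
  have hxgi : Integrable (fun x => x * g x) μ := hxg ▸ hid.indicator measurableSet_Ici
  have hxmi : Integrable (fun x => x * m x) μ :=
    hid.mul_bdd hm.aestronglyMeasurable (ae_of_all _ fun x => by
      rw [norm_of_nonneg (hm01 x).1]; exact (hm01 x).2)
  calc ∫ x, (x - c) * (g x - m x) ∂μ
      = ∫ x, ((x * g x - x * m x) - c * (g x - m x)) ∂μ := by congr 1; ext x; ring
    _ = (∫ x, x * g x ∂μ - ∫ x, x * m x ∂μ) - c * (∫ x, g x ∂μ - ∫ x, m x ∂μ) := by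
      rw [integral_sub, integral_sub hxgi hxmi, integral_const_mul, integral_sub hgi hmi]
      · exact hxgi.sub hxmi
      · exact (hgi.sub hmi).const_mul c
    _ = _ := by
      rw [hxg, integral_indicator measurableSet_Ici, integral_indicator_one measurableSet_Ici]

theorem ae_eq_indicator_Ici_of_integral_eq [NullSingletonClass μ]
    (hid : Integrable (fun x => x) μ) (hm : Measurable m) (hm01 : ∀ x, m x ∈ Icc (0 : ℝ) 1)
    (hmass : ∫ x, m x ∂μ = μ.real (Ici c)) (hmoment : ∫ x, x * m x ∂μ = ∫ x in Ici c, x ∂μ) :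
    m =ᵐ[μ] (Ici c).indicator 1 := by
  have hzero : ∫ x, (x - c) * ((Ici c).indicator 1 x - m x) ∂μ = 0 := by
    rw [integral_sub_mul_indicator_Ici_sub hid hm hm01, hmass, hmoment]
    ring
  have hae := (integral_eq_zero_iff_of_nonneg (fun x => sub_mul_indicator_Ici_sub_nonneg x (hm01 x))
    (integrable_sub_mul_indicator_Ici_sub hid hm hm01)).1 hzero
  filter_upwards [hae, Measure.ae_ne μ c] with x
    (hx : (x - c) * ((Ici c).indicator 1 x - m x) = 0) hxc
  exact (sub_eq_zero.1 ((mul_eq_zero.1 hx).resolve_left (sub_ne_zero.2 hxc))).symm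

end Bathtub

lemma ProbabilityTheory.continuous_cdf (μ : Measure ℝ) [IsProbabilityMeasure μ]
    [NullSingletonClass μ] : Continuous (cdf μ) := by
  refine continuous_iff_continuousAt.2 fun x =>
    (cdf μ).mono.continuousAt_iff_leftLim_eq_rightLim.2 ?_
  have h : ENNReal.ofReal (cdf μ x - Function.leftLim (cdf μ) x) = 0 := by
    rw [← StieltjesFunction.measure_singleton, measure_cdf, measure_singleton]
  rw [(cdf μ).rightLim_eq]
  exact le_antisymm ((cdf μ).mono.leftLim_le le_rfl) (sub_nonpos.1 (ENNReal.ofReal_eq_zero.1 h))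

namespace ProbabilityTheory

variable {μ : ℝ} {v : ℝ≥0}

lemma hasDerivAt_gaussianPDFReal (x : ℝ) :
    HasDerivAt (gaussianPDFReal μ v) (-((x - μ) / v) * gaussianPDFReal μ v x) x := by
  have h : HasDerivAt (fun y => -(y - μ) ^ 2 / (2 * v)) (-((x - μ) / v)) x := by
    refine ((((hasDerivAt_id' x).sub_const μ).fun_pow 2).fun_neg.div_const _).congr_deriv ?_
    rcases eq_or_ne (v : ℝ) 0 with hv | hv
    · simp [hv]
    · field_simp
      ring
  rw [gaussianPDFReal_def]
  exact (h.exp.const_mul _).congr_deriv (by ring)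

lemma hasDerivAt_neg_mul_gaussianPDFReal (hv : v ≠ 0) (x : ℝ) :
    HasDerivAt (fun y => -(v * gaussianPDFReal μ v y)) (gaussianPDFReal μ v x * (x - μ)) x := by
  refine (hasDerivAt_gaussianPDFReal x |>.const_mul (v : ℝ)).neg.congr_deriv ?_
  field_simp

lemma integrable_gaussianReal_iff (hv : v ≠ 0) {f : ℝ → ℝ} :
    Integrable f (gaussianReal μ v) ↔ Integrable fun x => gaussianPDFReal μ v x * f x := by
  rw [gaussianReal_of_var_ne_zero _ hv, integrable_withDensity_iff_integrable_smul'
    (measurable_gaussianPDF _ _) (ae_of_all _ fun _ => gaussianPDF_lt_top)]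
  simp

lemma setIntegral_gaussianReal_eq (hv : v ≠ 0) {s : Set ℝ} (hs : MeasurableSet s) (f : ℝ → ℝ) :
    ∫ x in s, f x ∂gaussianReal μ v = ∫ x in s, gaussianPDFReal μ v x * f x := by
  rw [gaussianReal_of_var_ne_zero _ hv, setIntegral_withDensity_eq_setIntegral_toReal_smul
    (measurable_gaussianPDF _ _) (ae_of_all _ fun _ => gaussianPDF_lt_top) _ hs]
  simp

lemma integrable_gaussianPDFReal_mul_sub (hv : v ≠ 0) :
    Integrable fun x => gaussianPDFReal μ v x * (x - μ) :=
  (integrable_gaussianReal_iff hv).1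
    (((memLp_id_gaussianReal 1).integrable le_rfl).sub (integrable_const μ))

lemma setIntegral_Iic_sub_gaussianReal (hv : v ≠ 0) (t : ℝ) :
    ∫ x in Iic t, (x - μ) ∂gaussianReal μ v = -(v * gaussianPDFReal μ v t) := by
  have hF := hasDerivAt_neg_mul_gaussianPDFReal (μ := μ) hv
  have hlim := tendsto_zero_of_hasDerivAt_of_integrableOn_Iic (a := 0) (fun x _ => hF x)
    (integrable_gaussianPDFReal_mul_sub hv).integrableOn
    ((integrable_gaussianPDFReal μ v).const_mul _).neg.integrableOn
  rw [setIntegral_gaussianReal_eq hv measurableSet_Iic, integral_Iic_of_hasDerivAt_of_tendsto'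
    (fun x _ => hF x) (integrable_gaussianPDFReal_mul_sub hv).integrableOn hlim, sub_zero]

lemma setIntegral_Ioi_sub_gaussianReal (hv : v ≠ 0) (t : ℝ) :
    ∫ x in Ioi t, (x - μ) ∂gaussianReal μ v = v * gaussianPDFReal μ v t := by
  have hF := hasDerivAt_neg_mul_gaussianPDFReal (μ := μ) hv
  have hlim := tendsto_zero_of_hasDerivAt_of_integrableOn_Ioi (a := 0) (fun x _ => hF x)
    (integrable_gaussianPDFReal_mul_sub hv).integrableOn
    ((integrable_gaussianPDFReal μ v).const_mul _).neg.integrableOn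
  rw [setIntegral_gaussianReal_eq hv measurableSet_Ioi, integral_Ioi_of_hasDerivAt_of_tendsto'
    (fun x _ => hF x) (integrable_gaussianPDFReal_mul_sub hv).integrableOn hlim, zero_sub,
    neg_neg]

lemma gaussianReal_zero_Ici_neg (t : ℝ) :
    gaussianReal 0 v (Ici (-t)) = gaussianReal 0 v (Iic t) := by
  conv_rhs => rw [← neg_zero, ← gaussianReal_map_neg,
    Measure.map_apply measurable_neg measurableSet_Iic]
  simp

end ProbabilityTheory

instance : IsProbabilityMeasure gamma1 := by unfold gamma1; infer_instance

instance : NullSingletonClass gamma1 := nullSingletonClass_gaussianReal one_ne_zero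

lemma integrable_id_gamma1 : Integrable (fun x => x) gamma1 :=
  (memLp_id_gaussianReal 1).integrable le_rfl

lemma Phi_eq_cdf : Phi = cdf gamma1 := by
  ext t
  rw [cdf_eq_real, measureReal_def, gamma1, gaussianReal_apply_eq_integral _ one_ne_zero,
    ENNReal.toReal_ofReal (setIntegral_nonneg measurableSet_Iic fun x _ =>
      gaussianPDFReal_nonneg 0 1 x), Phi]
  simp [gaussianPDFReal]

lemma Phi_Psi {a : ℝ} (h0 : 0 < a) (h1 : a < 1) : Phi (Psi a) = a := by
  rw [Psi, Phi_eq_cdf]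
  refine Function.invFun_eq (mem_range_of_exists_le_of_exists_ge (continuous_cdf gamma1) ?_ ?_)
  · exact ((tendsto_cdf_atBot gamma1).eventually_le_const h0).exists
  · exact ((tendsto_cdf_atTop gamma1).eventually_const_le h1).exists

lemma gamma1_real_Ici_neg (t : ℝ) : gamma1.real (Ici (-t)) = Phi t := by
  rw [Phi_eq_cdf, cdf_eq_real, measureReal_def, measureReal_def, gamma1,
    gaussianReal_zero_Ici_neg]

lemma setIntegral_Ici_id_gamma1 (t : ℝ) : ∫ x in Ici t, x ∂gamma1 = gaussianPDFReal 0 1 t := by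
  rw [integral_Ici_eq_integral_Ioi, gamma1]
  simpa using setIntegral_Ioi_sub_gaussianReal (μ := 0) one_ne_zero t

lemma qfun_eq (s : ℝ) : qfun s = gaussianPDFReal 0 1 (Psi s) := by
  rw [qfun, neg_eq_iff_eq_neg, gamma1]
  simpa using setIntegral_Iic_sub_gaussianReal (μ := 0) one_ne_zero (Psi s)

theorem center_of_mass_equality_case_general (m : ℝ → ℝ) (hm : Measurable m)
    (hm01 : ∀ x, m x ∈ Set.Icc (0 : ℝ) 1)
    (heq : ∫ x, x * m x ∂gamma1 = qfun (∫ x, m x ∂gamma1)) :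
    ∃ α : ℝ, ∀ᵐ x ∂gamma1, m x = if α ≤ x then 1 else 0 := by
  set a := ∫ x, m x ∂gamma1
  have hmi : Integrable m gamma1 := integrable_of_forall_mem_Icc hm hm01
  have hmoment_pos : 0 < ∫ x, x * m x ∂gamma1 := by
    rw [heq, qfun_eq]; exact gaussianPDFReal_pos _ _ _ one_ne_zero
  have ha0 : 0 < a :=
    integral_pos_of_integral_mul_ne_zero (fun x => (hm01 x).1) hmi hmoment_pos.ne'
  have ha1 : a < 1 := by
    refine integral_lt_one_of_integral_mul_ne (f := fun x => x) (fun x => (hm01 x).2) hmi ?_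
    rw [gamma1, integral_id_gaussianReal]
    exact hmoment_pos.ne'
  refine ⟨-Psi a, (ae_eq_indicator_Ici_of_integral_eq (c := -Psi a) integrable_id_gamma1 hm hm01
    ?_ ?_).mono fun x hx => by simp [hx, indicator_apply]⟩
  · rw [gamma1_real_Ici_neg, Phi_Psi ha0 ha1]
  · rw [heq, qfun_eq, setIntegral_Ici_id_gamma1]
    simp [gaussianPDFReal]

theorem center_of_mass_equality_case (m : ℝ → ℝ) (hm : Measurable m)
    (hm01 : ∀ x, m x ∈ Set.Icc (0 : ℝ) 1)
    (hpos : 0 ≤ ∫ x, x * m x ∂gamma1)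
    (heq : ∫ x, x * m x ∂gamma1 = qfun (∫ x, m x ∂gamma1)) :
    ∃ α : ℝ, ∀ᵐ x ∂gamma1, m x = if α ≤ x then 1 else 0 :=
  center_of_mass_equality_case_general m hm hm01 heq
end

section
/- The function s ↦ q(s)/s is decreasing on (0,1), and there exists a universal constant C > 0 such that q(s) ≤ C·s·√(|log s|) for all 0 < s < 1. -/
open MeasureTheory ProbabilityTheory Real Set Filter

noncomputable def q2 (s : ℝ) : ℝ := (Real.sqrt (2 * Real.pi))⁻¹ * Real.exp (-(Psi s) ^ 2 / 2)

/-!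
Write `φ = gpdf` for the standard Gaussian density, so that `s = Φ t` and `q s = φ t` for `t = Ψ s`.

Since `Ψ` is increasing, the first claim says that `φ / Φ` is decreasing. Its derivative is
`-φ (t Φ + φ) / Φ²`, and `t Φ(t) + φ(t) ≥ 0` is the Mills-ratio bound `Φ(t) ≤ φ(t) / |t|` for `t < 0`.

For the second claim, write `L = -log Φ(t)`. Integrating `φ` over an interval of length `h` ending
at `t` gives `Φ(t) ≥ h φ(|t| + h)`. If `t ≤ -1`, the choice `h = 1 / (2|t|)` gives
`φ(t) ≤ 6 |t| Φ(t)`, and the Mills-ratio bound gives `Φ(t) ≤ exp (-t²/2)`, that is `|t| ≤ 2 √L`.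
If `t > -1`, the choice `h = 1` bounds `Φ(t) ≥ Φ(-1)` from below by a constant, and
`L ≥ 1 - Φ(t) = Φ(-t) ≥ exp (-t²) / 9 ≥ φ(t)² / 3`.
-/

open Topology

noncomputable def gpdf (x : ℝ) : ℝ := (√(2 * π))⁻¹ * exp (-x ^ 2 / 2)

lemma gpdf_eq_gaussianPDFReal : gpdf = gaussianPDFReal 0 1 := by
  ext x
  simp [gpdf, gaussianPDFReal]

lemma gpdf_pos (x : ℝ) : 0 < gpdf x := by
  rw [gpdf_eq_gaussianPDFReal]
  exact gaussianPDFReal_pos _ _ _ one_ne_zero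

lemma integrable_gpdf : Integrable gpdf :=
  gpdf_eq_gaussianPDFReal ▸ integrable_gaussianPDFReal 0 1

lemma integral_gpdf : ∫ x, gpdf x = 1 := by
  rw [gpdf_eq_gaussianPDFReal]
  exact integral_gaussianPDFReal_eq_one 0 one_ne_zero

lemma continuous_gpdf : Continuous gpdf := by
  unfold gpdf
  fun_prop

lemma gpdf_neg (x : ℝ) : gpdf (-x) = gpdf x := by
  simp [gpdf]

lemma gpdf_le_gpdf_of_abs_le {x y : ℝ} (h : |y| ≤ |x|) : gpdf x ≤ gpdf y := by
  unfold gpdf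
  exact mul_le_mul_of_nonneg_left (exp_le_exp.2 (by nlinarith [sq_le_sq.2 h])) (by positivity)

lemma gpdf_add (x h : ℝ) : gpdf (x + h) = gpdf x * exp (-(x * h) - h ^ 2 / 2) := by
  rw [gpdf, gpdf, mul_assoc, ← exp_add]
  ring_nf

lemma two_le_sqrt_two_mul_pi : 2 ≤ √(2 * π) :=
  (le_sqrt (by norm_num) (by positivity)).2 (by nlinarith [pi_gt_three])

lemma sqrt_two_mul_pi_le_three : √(2 * π) ≤ 3 :=
  (sqrt_le_left (by norm_num)).2 (by nlinarith [pi_lt_d2])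

lemma gpdf_le_half_exp (x : ℝ) : gpdf x ≤ exp (-x ^ 2 / 2) / 2 := by
  have h : (√(2 * π))⁻¹ ≤ 2⁻¹ := inv_anti₀ two_pos two_le_sqrt_two_mul_pi
  unfold gpdf
  linarith [mul_le_mul_of_nonneg_right h (exp_pos (-x ^ 2 / 2)).le]

lemma hasDerivAt_gpdf (x : ℝ) : HasDerivAt gpdf (-x * gpdf x) x := by
  have h : HasDerivAt (fun y : ℝ => -y ^ 2 / 2) (-x) x :=
    ((hasDerivAt_pow 2 x).neg.div_const 2).congr_deriv (by push_cast; ring)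
  exact (h.exp.const_mul (√(2 * π))⁻¹).congr_deriv (by unfold gpdf; ring)

lemma integrable_mul_gpdf : Integrable fun x => x * gpdf x := by
  refine ((integrable_mul_exp_neg_mul_sq (b := 1 / 2) (by norm_num)).const_mul
    (√(2 * π))⁻¹).congr (ae_of_all _ fun x => ?_)
  simp only [gpdf]
  ring_nf

lemma tendsto_gpdf_atBot : Tendsto gpdf atBot (𝓝 0) :=
  tendsto_zero_of_hasDerivAt_of_integrableOn_Iic (a := 0) (fun x _ => hasDerivAt_gpdf x)
    (by simpa using integrable_mul_gpdf.neg.integrableOn) integrable_gpdf.integrableOn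

lemma setIntegral_Iic_mul_gpdf (t : ℝ) : ∫ x in Iic t, x * gpdf x = -gpdf t := by
  have h := integral_Iic_of_hasDerivAt_of_tendsto' (f := fun x => -gpdf x) (a := t) (m := 0)
    (fun x _ => (hasDerivAt_gpdf x).neg.congr_deriv (by ring)) integrable_mul_gpdf.integrableOn
    (by simpa using tendsto_gpdf_atBot.neg)
  rwa [sub_zero] at h

lemma Phi_eq_setIntegral (t : ℝ) : Phi t = ∫ x in Iic t, gpdf x := rfl

lemma Phi_nonneg (t : ℝ) : 0 ≤ Phi t :=
  setIntegral_nonneg measurableSet_Iic fun x _ => (gpdf_pos x).le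

lemma Phi_sub_Phi (a b : ℝ) : Phi b - Phi a = ∫ x in a..b, gpdf x :=
  intervalIntegral.integral_Iic_sub_Iic integrable_gpdf.integrableOn integrable_gpdf.integrableOn

lemma hasDerivAt_Phi (t : ℝ) : HasDerivAt Phi (gpdf t) t := by
  have h : Phi = fun x => Phi 0 + ∫ u in (0 : ℝ)..x, gpdf u := by
    funext x
    rw [← Phi_sub_Phi]
    ring
  rw [h]
  exact ((continuous_gpdf.integral_hasStrictDerivAt 0 t).hasDerivAt).const_add _

lemma continuous_Phi : Continuous Phi :=
  continuous_iff_continuousAt.2 fun t => (hasDerivAt_Phi t).continuousAt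

lemma Phi_strictMono : StrictMono Phi :=
  strictMono_of_deriv_pos fun t => (hasDerivAt_Phi t).deriv ▸ gpdf_pos t

lemma Phi_pos (t : ℝ) : 0 < Phi t :=
  (Phi_nonneg (t - 1)).trans_lt (Phi_strictMono (by linarith))

lemma Phi_neg (t : ℝ) : Phi (-t) = 1 - Phi t := by
  have h : Phi (-t) = ∫ x in Ioi t, gpdf x := by
    rw [Phi_eq_setIntegral, ← integral_comp_neg_Ioi]
    simp only [gpdf_neg]
  rw [h, ← integral_gpdf, ← intervalIntegral.integral_Iic_add_Ioi (b := t)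
    integrable_gpdf.integrableOn integrable_gpdf.integrableOn, Phi_eq_setIntegral]
  ring

lemma Phi_lt_one (t : ℝ) : Phi t < 1 := by
  linarith [Phi_neg t, Phi_pos (-t)]

lemma Phi_le_gpdf_div_neg {t : ℝ} (ht : t < 0) : Phi t ≤ gpdf t / -t := by
  calc Phi t ≤ ∫ x in Iic t, t⁻¹ * (x * gpdf x) := by
        rw [Phi_eq_setIntegral]
        refine setIntegral_mono_on integrable_gpdf.integrableOn
          (integrable_mul_gpdf.const_mul _).integrableOn measurableSet_Iic fun x hx => ?_
        rw [← mul_assoc, inv_mul_eq_div]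
        exact le_mul_of_one_le_left (gpdf_pos x).le ((one_le_div_of_neg ht).2 hx)
    _ = gpdf t / -t := by
        rw [integral_const_mul, setIntegral_Iic_mul_gpdf]
        field_simp

lemma mul_Phi_add_gpdf_nonneg (t : ℝ) : 0 ≤ t * Phi t + gpdf t := by
  rcases le_or_gt 0 t with ht | ht
  · exact add_nonneg (mul_nonneg ht (Phi_nonneg t)) (gpdf_pos t).le
  · have := (le_div_iff₀ (neg_pos.2 ht)).1 (Phi_le_gpdf_div_neg ht)
    linarith

lemma tendsto_Phi_atBot : Tendsto Phi atBot (𝓝 0) := by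
  have hbound : Tendsto (fun t => gpdf t * (-t)⁻¹) atBot (𝓝 0) := by
    simpa using tendsto_gpdf_atBot.mul (tendsto_inv_atTop_zero.comp tendsto_neg_atBot_atTop)
  refine squeeze_zero' (.of_forall Phi_nonneg) ?_ hbound
  filter_upwards [eventually_lt_atBot 0] with t ht
  exact div_eq_mul_inv (gpdf t) (-t) ▸ Phi_le_gpdf_div_neg ht

lemma tendsto_Phi_atTop : Tendsto Phi atTop (𝓝 1) := by
  have h := (tendsto_Phi_atBot.comp tendsto_neg_atTop_atBot).const_sub 1
  simpa [Function.comp_def, Phi_neg] using h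

lemma Ioo_subset_range_Phi : Ioo 0 1 ⊆ range Phi := fun _ ⟨hs0, hs1⟩ =>
  mem_range_of_exists_le_of_exists_ge continuous_Phi
    (tendsto_Phi_atBot.eventually (ge_mem_nhds hs0)).exists
    (tendsto_Phi_atTop.eventually (le_mem_nhds hs1)).exists

lemma Phi_Psi_s7 {s : ℝ} (hs : s ∈ Ioo 0 1) : Phi (Psi s) = s :=
  Function.invFun_eq (Ioo_subset_range_Phi hs)

lemma q2_eq_gpdf_Psi (s : ℝ) : q2 s = gpdf (Psi s) := rfl

lemma Psi_monotoneOn : MonotoneOn Psi (Ioo 0 1) := fun _ ha _ hb hab =>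
  Phi_strictMono.le_iff_le.1 (by rwa [Phi_Psi_s7 ha, Phi_Psi_s7 hb])

lemma antitone_gpdf_div_Phi : Antitone fun t => gpdf t / Phi t := by
  have hd (t : ℝ) : HasDerivAt (fun t => gpdf t / Phi t)
      ((-t * gpdf t * Phi t - gpdf t * gpdf t) / Phi t ^ 2) t :=
    (hasDerivAt_gpdf t).div (hasDerivAt_Phi t) (Phi_pos t).ne'
  refine antitone_of_deriv_nonpos (fun t => (hd t).differentiableAt) fun t => ?_
  rw [(hd t).deriv]
  refine div_nonpos_of_nonpos_of_nonneg ?_ (sq_nonneg _)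
  nlinarith [mul_nonneg (gpdf_pos t).le (mul_Phi_add_gpdf_nonneg t)]

lemma mul_gpdf_abs_add_le_Phi (t : ℝ) {h : ℝ} (hh : 0 ≤ h) : h * gpdf (|t| + h) ≤ Phi t := by
  have hmono : ∫ _ in (t - h)..t, gpdf (|t| + h) ≤ ∫ x in (t - h)..t, gpdf x := by
    refine intervalIntegral.integral_mono_on (by linarith) intervalIntegrable_const
      (continuous_gpdf.intervalIntegrable _ _) fun x hx => gpdf_le_gpdf_of_abs_le ?_
    rw [abs_of_nonneg (add_nonneg (abs_nonneg t) hh)]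
    exact abs_le.2 ⟨by linarith [hx.1, neg_abs_le t], by linarith [hx.2, le_abs_self t]⟩
  calc h * gpdf (|t| + h) = ∫ _ in (t - h)..t, gpdf (|t| + h) := by simp
    _ ≤ ∫ x in (t - h)..t, gpdf x := hmono
    _ = Phi t - Phi (t - h) := (Phi_sub_Phi _ _).symm
    _ ≤ Phi t := sub_le_self _ (Phi_nonneg _)

lemma gpdf_le_mul_Phi_of_le_neg_one {t : ℝ} (ht : t ≤ -1) : gpdf t ≤ 6 * -t * Phi t := by
  set h := (2 * -t)⁻¹
  have hh0 : 0 < h := inv_pos.2 (by linarith)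
  have hth : 2 * -t * h = 1 := mul_inv_cancel₀ (by linarith)
  have hexp : 3 / 8 ≤ exp (-(-t * h) - h ^ 2 / 2) := by
    nlinarith [add_one_le_exp (-(-t * h) - h ^ 2 / 2)]
  have hinterval := mul_gpdf_abs_add_le_Phi t hh0.le
  rw [abs_of_neg (by linarith), gpdf_add, gpdf_neg] at hinterval
  have hlow : h * gpdf t * (3 / 8) ≤ Phi t := by
    nlinarith [mul_le_mul_of_nonneg_left hexp (mul_pos hh0 (gpdf_pos t)).le]
  have hscaled : gpdf t * (3 / 8) ≤ 2 * -t * Phi t :=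
    calc gpdf t * (3 / 8) = 2 * -t * (h * gpdf t * (3 / 8)) := by
          linear_combination (-(gpdf t * (3 / 8))) * hth
      _ ≤ 2 * -t * Phi t := mul_le_mul_of_nonneg_left hlow (by linarith)
  nlinarith [mul_nonneg (show 0 ≤ -t by linarith) (Phi_pos t).le]

lemma Phi_le_exp_of_le_neg_one {t : ℝ} (ht : t ≤ -1) : Phi t ≤ exp (-t ^ 2 / 2) :=
  calc Phi t ≤ gpdf t / -t := Phi_le_gpdf_div_neg (by linarith)
    _ ≤ gpdf t := div_le_self (gpdf_pos t).le (by linarith)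
    _ ≤ exp (-t ^ 2 / 2) / 2 := gpdf_le_half_exp t
    _ ≤ exp (-t ^ 2 / 2) := half_le_self (exp_pos _).le

lemma inv_three_le_exp_neg_one : 3⁻¹ ≤ exp (-1) := by
  rw [exp_neg]
  exact inv_anti₀ (exp_pos 1) (by linarith [exp_one_lt_d9])

lemma exp_neg_sq_div_nine_le_Phi (t : ℝ) : exp (-t ^ 2) / 9 ≤ Phi t := by
  have hc : 3⁻¹ ≤ (√(2 * π))⁻¹ :=
    inv_anti₀ (by linarith [two_le_sqrt_two_mul_pi]) sqrt_two_mul_pi_le_three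
  have he : exp (-t ^ 2) / 3 ≤ exp (-(|t| + 1) ^ 2 / 2) :=
    calc exp (-t ^ 2) / 3 ≤ exp (-t ^ 2) * exp (-1) := by
          rw [div_eq_mul_inv]
          exact mul_le_mul_of_nonneg_left inv_three_le_exp_neg_one (exp_pos _).le
      _ ≤ exp (-(|t| + 1) ^ 2 / 2) := by
          rw [← exp_add]
          exact exp_le_exp.2 (by nlinarith [sq_abs t, sq_nonneg (|t| - 1)])
  have hinterval := mul_gpdf_abs_add_le_Phi t zero_le_one
  rw [one_mul, gpdf] at hinterval
  nlinarith [mul_le_mul hc he (by positivity) (by positivity)]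

lemma gpdf_le_mul_Phi_mul_sqrt_neg_log_of_le_neg_one {t : ℝ} (ht : t ≤ -1) :
    gpdf t ≤ 12 * Phi t * √(-log (Phi t)) := by
  have hlog : t ^ 2 / 2 ≤ -log (Phi t) := by
    linarith [(log_le_iff_le_exp (Phi_pos t)).2 (Phi_le_exp_of_le_neg_one ht)]
  have hsqrt : -t / 2 ≤ √(-log (Phi t)) := le_sqrt_of_sq_le (by nlinarith)
  calc gpdf t ≤ 6 * -t * Phi t := gpdf_le_mul_Phi_of_le_neg_one ht
    _ = 12 * Phi t * (-t / 2) := by ring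
    _ ≤ 12 * Phi t * √(-log (Phi t)) :=
        mul_le_mul_of_nonneg_left hsqrt (by linarith [Phi_pos t])

lemma gpdf_le_mul_Phi_mul_sqrt_neg_log_of_neg_one_lt {t : ℝ} (ht : -1 < t) :
    gpdf t ≤ 41 * Phi t * √(-log (Phi t)) := by
  have hL : exp (-t ^ 2) / 9 ≤ -log (Phi t) := by
    have h := exp_neg_sq_div_nine_le_Phi (-t)
    rw [neg_sq, Phi_neg] at h
    linarith [log_le_sub_one_of_pos (Phi_pos t)]
  have hsqrt : exp (-t ^ 2 / 2) / 3 ≤ √(-log (Phi t)) := by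
    refine le_sqrt_of_sq_le (le_trans (le_of_eq ?_) hL)
    rw [div_pow, ← exp_nat_mul]
    ring_nf
  have hPhi : 1 / 27 ≤ Phi t := by
    have h := exp_neg_sq_div_nine_le_Phi (-1)
    have hmono : Phi (-1) ≤ Phi t := Phi_strictMono.monotone ht.le
    norm_num at h
    linarith [inv_three_le_exp_neg_one]
  calc gpdf t ≤ exp (-t ^ 2 / 2) / 2 := gpdf_le_half_exp t
    _ = 81 / 2 * (1 / 27) * (exp (-t ^ 2 / 2) / 3) := by ring
    _ ≤ 81 / 2 * Phi t * √(-log (Phi t)) := by gcongr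
    _ ≤ 41 * Phi t * √(-log (Phi t)) := by
        gcongr
        norm_num

lemma gpdf_le_mul_Phi_mul_sqrt_abs_log (t : ℝ) : gpdf t ≤ 41 * Phi t * √|log (Phi t)| := by
  rw [abs_of_neg (log_neg (Phi_pos t) (Phi_lt_one t))]
  rcases le_or_gt t (-1) with ht | ht
  · refine (gpdf_le_mul_Phi_mul_sqrt_neg_log_of_le_neg_one ht).trans ?_
    gcongr
    · exact (Phi_pos t).le
    · norm_num
  · exact gpdf_le_mul_Phi_mul_sqrt_neg_log_of_neg_one_lt ht

theorem q_over_s_decreasing_and_upper :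
    AntitoneOn (fun s => q2 s / s) (Set.Ioo (0 : ℝ) 1) ∧
    ∃ C > (0 : ℝ), ∀ s ∈ Set.Ioo (0 : ℝ) 1, q2 s ≤ C * s * Real.sqrt |Real.log s| := by
  refine ⟨(antitone_gpdf_div_Phi.comp_monotoneOn Psi_monotoneOn).congr fun s hs => ?_,
    41, by norm_num, fun s hs => ?_⟩
  · simp only [Function.comp_apply, q2_eq_gpdf_Psi, Phi_Psi_s7 hs]
  · simpa only [q2_eq_gpdf_Psi, Phi_Psi_s7 hs] using gpdf_le_mul_Phi_mul_sqrt_abs_log (Psi s)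
end
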